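/- Let A, B, C, L be real numbers with 0 < C, 0 < L, C ≤ B, and L + C ≤ A. Then 18 · log₂ L − 18 · log₂ B ≤ 36 · log₂ A − 36 · log₂ C − 36. -/
import Mathlib

theorem white_white_pairing_rank_bound (A B C L : ℝ)
    (hC : 0 < C) (hL : 0 < L) (hCB : C ≤ B) (hLCA : L + C ≤ A) :
    18 * Real.logb 2 L - 18 * Real.logb 2 B ≤
      36 * Real.logb 2 A - 36 * Real.logb 2 C - 36 := by
  have hA : 0 < A := lt_of_lt_of_le (by linarith) hLCA
  have hB : 0 < B := lt_of_lt_of_le hC hCB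
  have hsq : L * C ≤ (A / 2) ^ 2 := by nlinarith [sq_nonneg (L - C)]
  have hA2 : (0:ℝ) < A / 2 := by linarith
  have h1 : Real.logb 2 L + Real.logb 2 C ≤ 2 * Real.logb 2 A - 2 := by
    calc Real.logb 2 L + Real.logb 2 C = Real.logb 2 (L * C) :=
          (Real.logb_mul hL.ne' hC.ne').symm
      _ ≤ Real.logb 2 ((A / 2) ^ 2) :=
          Real.logb_le_logb_of_le (by norm_num) (by positivity) hsq
      _ = 2 * Real.logb 2 (A / 2) := by
          rw [Real.logb_pow]; push_cast; ring
      _ = 2 * Real.logb 2 A - 2 := by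
          rw [Real.logb_div hA.ne' (by norm_num), Real.logb_self_eq_one (by norm_num)]
          ring
  have h2 : Real.logb 2 C ≤ Real.logb 2 B :=
    Real.logb_le_logb_of_le (by norm_num) hC hCB
  linarith
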